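/- arXiv:1510.01073 — 4 statements merged into one kernel-verified Lean document; each statement's English description precedes it below -/
import Mathlib

section
/- The alternative correction equation (I - W W^H)(A - λ̃ I)(I - W W^H) v = -r, subject to the constraint W^H v = 0, has no solution v if and only if the m×m matrix M = W^H (A - λ̃ I)^{-1} W is singular and the vector z = W^H u does not lie in the column space (range) of M. -/
/-!
Write `B = A - λ̃ I` and `P = I - W Wᴴ`. Since `P v = v` whenever `Wᴴ v = 0`, the constrained
equation reads `B v - W c = -B u` with `c = Wᴴ B v`, i.e. `v = B⁻¹ W c - u`, and applying `Wᴴ`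
gives `Wᴴ u = M c`. Conversely, for any `c` with `Wᴴ u = M c` the vector `v = B⁻¹ W c - u`
satisfies the constraint, and `Wᴴ r = 0` makes it a solution. So the equation is solvable exactly
when `Wᴴ u` lies in the range of `M`, which is automatic when `M` is invertible.
-/

open Matrix

namespace Matrix

variable {n m p K : Type*} [Fintype n] [DecidableEq n] [Fintype m] [CommRing K]

theorem one_sub_mul_mul_of_mul_eq_zero (W : Matrix n m K) {V : Matrix m n K}
    {x : Matrix n p K} (hx : V * x = 0) : (1 - W * V) * x = x := by
  rw [Matrix.sub_mul, Matrix.one_mul, Matrix.mul_assoc, hx, Matrix.mul_zero, sub_zero]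

theorem projected_mul_of_mul_eq_zero (B : Matrix n n K) (W : Matrix n m K) {V : Matrix m n K}
    {v : Matrix n p K} (hv : V * v = 0) :
    (1 - W * V) * B * (1 - W * V) * v = B * v - W * (V * (B * v)) := by
  rw [Matrix.mul_assoc, one_sub_mul_mul_of_mul_eq_zero W hv, Matrix.mul_assoc, Matrix.sub_mul,
    Matrix.one_mul, Matrix.mul_assoc]

variable {B : Matrix n n K} {W : Matrix n m K} {V : Matrix m n K} {u v : Matrix n p K}

theorem mul_eq_of_projected_solution (hB : IsUnit B.det) (hv : V * v = 0)
    (hsol : (1 - W * V) * B * (1 - W * V) * v = -(B * u)) :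
    V * u = V * B⁻¹ * W * (V * (B * v)) := by
  rw [projected_mul_of_mul_eq_zero B W hv, ← neg_sub, neg_inj] at hsol
  have hu : u = B⁻¹ * (W * (V * (B * v))) - v := by
    rw [← nonsing_inv_mul_cancel_left B u hB, ← hsol, Matrix.mul_sub,
      nonsing_inv_mul_cancel_left B _ hB]
  rw [hu, Matrix.mul_sub, hv, sub_zero, Matrix.mul_assoc, Matrix.mul_assoc]

theorem projected_solution_of_mul_eq [DecidableEq m] (hB : IsUnit B.det) (hVW : V * W = 1)
    (hVBu : V * (B * u) = 0) {c : Matrix m p K} (hc : V * u = V * B⁻¹ * W * c) :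
    V * (B⁻¹ * (W * c) - u) = 0 ∧
      (1 - W * V) * B * (1 - W * V) * (B⁻¹ * (W * c) - u) = -(B * u) := by
  have hv : V * (B⁻¹ * (W * c) - u) = 0 := by
    rw [Matrix.mul_sub, hc, Matrix.mul_assoc, Matrix.mul_assoc, sub_self]
  refine ⟨hv, ?_⟩
  rw [projected_mul_of_mul_eq_zero B W hv, Matrix.mul_sub, mul_nonsing_inv_cancel_left B _ hB,
    Matrix.mul_sub, hVBu, sub_zero, ← Matrix.mul_assoc V W, hVW, Matrix.one_mul,
    sub_sub_cancel_left]

theorem exists_projected_solution_iff [DecidableEq m] (hB : IsUnit B.det) (hVW : V * W = 1)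
    (hVBu : V * (B * u) = 0) :
    (∃ v : Matrix n p K, V * v = 0 ∧ (1 - W * V) * B * (1 - W * V) * v = -(B * u)) ↔
      ∃ c : Matrix m p K, V * u = V * B⁻¹ * W * c :=
  ⟨fun ⟨_, hv, hsol⟩ => ⟨_, mul_eq_of_projected_solution hB hv hsol⟩,
    fun ⟨_, hc⟩ => ⟨_, projected_solution_of_mul_eq hB hVW hVBu hc⟩⟩

end Matrix

theorem alt_correction_no_solution_iff_general
    {n m : ℕ}
    (A : Matrix (Fin n) (Fin n) ℂ) (lam : ℂ)
    (hA : IsUnit (A - lam • (1 : Matrix (Fin n) (Fin n) ℂ)))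
    (W : Matrix (Fin n) (Fin m) ℂ) (hW : Wᴴ * W = 1)
    (u : Matrix (Fin n) (Fin 1) ℂ)
    (r : Matrix (Fin n) (Fin 1) ℂ)
    (hr : r = (A - lam • 1) * u)
    (hWr : Wᴴ * r = 0)
    (M : Matrix (Fin m) (Fin m) ℂ)
    (hM : M = Wᴴ * (A - lam • (1 : Matrix (Fin n) (Fin n) ℂ))⁻¹ * W) :
    (¬ ∃ v : Matrix (Fin n) (Fin 1) ℂ,
        Wᴴ * v = 0 ∧
          (1 - W * Wᴴ) * (A - lam • 1) * (1 - W * Wᴴ) * v = -r) ↔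
      (¬ IsUnit M ∧ ¬ ∃ c : Matrix (Fin m) (Fin 1) ℂ, Wᴴ * u = M * c) := by
  have hrange : IsUnit M → ∃ c : Matrix (Fin m) (Fin 1) ℂ, Wᴴ * u = M * c :=
    fun hunit => ⟨M⁻¹ * (Wᴴ * u),
      (mul_nonsing_inv_cancel_left M _ ((isUnit_iff_isUnit_det M).mp hunit)).symm⟩
  subst hr hM
  rw [exists_projected_solution_iff ((isUnit_iff_isUnit_det _).mp hA) hW hWr]
  tauto

/-- The alternative correction equation
`(I - W Wᴴ)(A - λ̃ I)(I - W Wᴴ) v = -r`, subject to `Wᴴ v = 0`,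
has no solution `v` iff `M = Wᴴ (A - λ̃ I)⁻¹ W` is singular and
`z = Wᴴ u` is not in the column space of `M`. -/
theorem alt_correction_no_solution_iff
    {n m : ℕ} (hm : m ≤ n)
    (A : Matrix (Fin n) (Fin n) ℂ) (lam : ℂ)
    (hA : IsUnit (A - lam • (1 : Matrix (Fin n) (Fin n) ℂ)))
    (W : Matrix (Fin n) (Fin m) ℂ) (hW : Wᴴ * W = 1)
    (u : Matrix (Fin n) (Fin 1) ℂ)
    (huW : ∃ c : Matrix (Fin m) (Fin 1) ℂ, u = W * c)
    (hu : uᴴ * u = 1)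
    (hlam : (uᴴ * A * u) 0 0 = lam)
    (r : Matrix (Fin n) (Fin 1) ℂ)
    (hr : r = (A - lam • 1) * u)
    (hWr : Wᴴ * r = 0)
    (M : Matrix (Fin m) (Fin m) ℂ)
    (hM : M = Wᴴ * (A - lam • (1 : Matrix (Fin n) (Fin n) ℂ))⁻¹ * W) :
    (¬ ∃ v : Matrix (Fin n) (Fin 1) ℂ,
        Wᴴ * v = 0 ∧
          (1 - W * Wᴴ) * (A - lam • 1) * (1 - W * Wᴴ) * v = -r) ↔
      (¬ IsUnit M ∧ ¬ ∃ c : Matrix (Fin m) (Fin 1) ℂ, Wᴴ * u = M * c) :=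
  alt_correction_no_solution_iff_general A lam hA W hW u r hr hWr M hM
end

section
/- The alternating two-sided Jacobi–Davidson left correction equation (I - (p q^H)/(q^H p))(A^H - θ̄ I)(I - p p^H) t = -r_p, subject to the constraint p^H t = 0, has exactly one solution t if and only if p^H (A - θ I)^{-1} p ≠ 0; and it has no solution if and only if p^H (A - θ I)^{-1} p = 0. -/
/-!
Write `M = A - θ I`, so that the left correction equation reads
`(I - p qᴴ / (qᴴ p)) Mᴴ (I - p pᴴ) t = -Mᴴ p`. The choice of `θ` as the two-sided Rayleigh
quotient gives `pᴴ M q = 0`, i.e. `qᴴ Mᴴ p = 0`. For `t ⟂ p` the right projector acts trivially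
and the oblique left projector only removes a multiple of `p`, so the equation says exactly that
`Mᴴ (t + p) = α p` for some scalar `α`; hence `t + p = α (Mᴴ)⁻¹ p`. The constraint `pᴴ t = 0`
turns into `α · pᴴ (Mᴴ)⁻¹ p = 1`, which is solvable (with a unique `α`, hence a unique `t`)
exactly when `pᴴ (Mᴴ)⁻¹ p`, the conjugate of `pᴴ M⁻¹ p`, is nonzero.
-/

open Matrix

namespace Matrix

theorem ext_fin_one {α : Type*} {M N : Matrix (Fin 1) (Fin 1) α} (h : M 0 0 = N 0 0) :
    M = N := by
  ext i j
  rw [Subsingleton.elim i 0, Subsingleton.elim j 0, h]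

theorem mul_fin_one_eq_smul {R m : Type*} [CommSemiring R] (x : Matrix m (Fin 1) R)
    (M : Matrix (Fin 1) (Fin 1) R) : x * M = M 0 0 • x := by
  ext i j
  rw [Subsingleton.elim j 0]
  simp [mul_apply, mul_comm]

variable {K : Type*} [Field K] {m : Type*} [Fintype m] [DecidableEq m]

theorem mul_sub_smul_one_mul_eq_zero (A : Matrix m m K) {w : Matrix (Fin 1) m K}
    {q : Matrix m (Fin 1) K} (hwq : (w * q) 0 0 ≠ 0) {θ : K}
    (hθ : θ = (w * A * q) 0 0 / (w * q) 0 0) :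
    w * (A - θ • 1) * q = 0 := by
  apply ext_fin_one
  simp only [Matrix.mul_sub, Matrix.sub_mul, Matrix.mul_smul, Matrix.smul_mul, Matrix.mul_one,
    sub_apply, smul_apply, smul_eq_mul, zero_apply, hθ]
  field_simp
  ring

theorem one_sub_smul_mul_mul (p : Matrix m (Fin 1) K) (z : Matrix (Fin 1) m K) (c : K)
    (x : Matrix m (Fin 1) K) :
    (1 - c • (p * z)) * x = x - (c * (z * x) 0 0) • p := by
  rw [Matrix.sub_mul, Matrix.one_mul, Matrix.smul_mul, Matrix.mul_assoc,
    mul_fin_one_eq_smul p (z * x), smul_smul]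

theorem one_sub_mul_mul_of_mul_eq_zero_s8 {p t : Matrix m (Fin 1) K} {w : Matrix (Fin 1) m K}
    (hwt : w * t = 0) : (1 - p * w) * t = t := by
  rw [Matrix.sub_mul, Matrix.one_mul, Matrix.mul_assoc, hwt, Matrix.mul_zero, sub_zero]

theorem correction_eq_iff_exists_mul_add_eq_smul (B : Matrix m m K) {p t : Matrix m (Fin 1) K}
    {w z : Matrix (Fin 1) m K} (hzp : (z * p) 0 0 ≠ 0) (hzBp : z * (B * p) = 0)
    (hwt : w * t = 0) :
    (1 - ((z * p) 0 0)⁻¹ • (p * z)) * B * (1 - p * w) * t = -(B * p) ↔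
      ∃ α : K, B * (t + p) = α • p := by
  rw [Matrix.mul_assoc _ _ t, one_sub_mul_mul_of_mul_eq_zero_s8 hwt, Matrix.mul_assoc,
    one_sub_smul_mul_mul, Matrix.mul_add]
  constructor
  · intro h
    exact ⟨((z * p) 0 0)⁻¹ * (z * (B * t)) 0 0, by linear_combination (norm := module) h⟩
  · rintro ⟨α, hα⟩
    have hzBt : (z * (B * t)) 0 0 = α * (z * p) 0 0 := by
      simpa [Matrix.mul_add, hzBp, Matrix.mul_smul] using congrArg (fun x => (z * x) 0 0) hα
    rw [hzBt, mul_comm α, inv_mul_cancel_left₀ hzp]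
    linear_combination (norm := module) hα

theorem exists_mul_add_eq_smul_iff {B : Matrix m m K} (hB : IsUnit B) {p t : Matrix m (Fin 1) K}
    {w : Matrix (Fin 1) m K} (hwp : w * p = 1) :
    (w * t = 0 ∧ ∃ α : K, B * (t + p) = α • p) ↔
      (w * B⁻¹ * p) 0 0 ≠ 0 ∧ t = ((w * B⁻¹ * p) 0 0)⁻¹ • (B⁻¹ * p) - p := by
  have hdet : IsUnit B.det := (isUnit_iff_isUnit_det B).mp hB
  constructor
  · rintro ⟨hwt, α, hα⟩
    have htp : t + p = α • (B⁻¹ * p) := by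
      rw [← Matrix.mul_smul, ← hα, ← Matrix.mul_assoc, nonsing_inv_mul B hdet, Matrix.one_mul]
    have hαs : α * (w * B⁻¹ * p) 0 0 = 1 := by
      simpa [Matrix.mul_add, hwt, hwp, Matrix.mul_smul, Matrix.mul_assoc] using
        (congrArg (fun x => (w * x) 0 0) htp).symm
    refine ⟨right_ne_zero_of_mul_eq_one hαs, ?_⟩
    rw [← eq_inv_of_mul_eq_one_left hαs, ← htp, add_sub_cancel_right]
  · rintro ⟨hs, rfl⟩
    refine ⟨ext_fin_one ?_, ((w * B⁻¹ * p) 0 0)⁻¹, ?_⟩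
    · simp [Matrix.mul_sub, Matrix.mul_smul, hwp, ← Matrix.mul_assoc, inv_mul_cancel₀ hs]
    · rw [sub_add_cancel, Matrix.mul_smul, ← Matrix.mul_assoc, mul_nonsing_inv B hdet,
        Matrix.one_mul]

theorem correction_eq_iff {B : Matrix m m K} (hB : IsUnit B) {p : Matrix m (Fin 1) K}
    {w z : Matrix (Fin 1) m K} (hwp : w * p = 1) (hzp : (z * p) 0 0 ≠ 0)
    (hzBp : z * (B * p) = 0) (t : Matrix m (Fin 1) K) :
    (w * t = 0 ∧ (1 - ((z * p) 0 0)⁻¹ • (p * z)) * B * (1 - p * w) * t = -(B * p)) ↔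
      (w * B⁻¹ * p) 0 0 ≠ 0 ∧ t = ((w * B⁻¹ * p) 0 0)⁻¹ • (B⁻¹ * p) - p :=
  (and_congr_right fun hwt => correction_eq_iff_exists_mul_add_eq_smul B hzp hzBp hwt).trans
    (exists_mul_add_eq_smul_iff hB hwp)

end Matrix

theorem existsUnique_iff_and_not_exists_iff {α : Type*} {P : α → Prop} {c : Prop} {t₀ : α}
    (h : ∀ t, P t ↔ c ∧ t = t₀) : ((∃! t, P t) ↔ c) ∧ ((¬ ∃ t, P t) ↔ ¬ c) := by
  simp only [h]
  constructor
  · exact ⟨fun ⟨_, ⟨hc, _⟩, _⟩ => hc, fun hc => ⟨t₀, ⟨hc, rfl⟩, fun _ ht => ht.2⟩⟩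
  · exact ⟨fun hne hc => hne ⟨t₀, hc, rfl⟩, fun hnc ⟨_, hc, _⟩ => hnc hc⟩

/-- The alternating two-sided Jacobi–Davidson left correction equation
`(I - (p qᴴ)/(qᴴ p))(Aᴴ - θ̄ I)(I - p pᴴ) t = -r_p`, subject to `pᴴ t = 0`,
has exactly one solution iff `pᴴ (A - θ I)⁻¹ p ≠ 0`, and has no solution iff
`pᴴ (A - θ I)⁻¹ p = 0`. -/
theorem alternating_two_sided_jd_left_correction
    {n : ℕ} (A : Matrix (Fin n) (Fin n) ℂ)
    (p q : Matrix (Fin n) (Fin 1) ℂ)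
    (hp : pᴴ * p = 1)
    (hpq : (pᴴ * q) 0 0 ≠ 0)
    (θ : ℂ) (hθ : θ = (pᴴ * A * q) 0 0 / (pᴴ * q) 0 0)
    (hA : IsUnit (A - θ • (1 : Matrix (Fin n) (Fin n) ℂ)))
    (rp : Matrix (Fin n) (Fin 1) ℂ)
    (hrp : rp = (Aᴴ - (starRingEnd ℂ θ) • 1) * p) :
    ((∃! t : Matrix (Fin n) (Fin 1) ℂ,
        pᴴ * t = 0 ∧
          (1 - ((qᴴ * p) 0 0)⁻¹ • (p * qᴴ)) * (Aᴴ - (starRingEnd ℂ θ) • 1) *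
              (1 - p * pᴴ) * t = -rp) ↔
      (pᴴ * (A - θ • (1 : Matrix (Fin n) (Fin n) ℂ))⁻¹ * p) 0 0 ≠ 0) ∧
    ((¬ ∃ t : Matrix (Fin n) (Fin 1) ℂ,
        pᴴ * t = 0 ∧
          (1 - ((qᴴ * p) 0 0)⁻¹ • (p * qᴴ)) * (Aᴴ - (starRingEnd ℂ θ) • 1) *
              (1 - p * pᴴ) * t = -rp) ↔
      (pᴴ * (A - θ • (1 : Matrix (Fin n) (Fin n) ℂ))⁻¹ * p) 0 0 = 0) := by
  set M := A - θ • (1 : Matrix (Fin n) (Fin n) ℂ)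
  have hMH : Aᴴ - (starRingEnd ℂ θ) • 1 = Mᴴ := by
    simp [M, conjTranspose_sub, conjTranspose_smul]
  have hqp : (qᴴ * p) 0 0 ≠ 0 := by
    rw [← conjTranspose_conjTranspose p, ← conjTranspose_mul, conjTranspose_apply]
    exact star_ne_zero.mpr hpq
  have hqMp : qᴴ * (Mᴴ * p) = 0 := by
    rw [← conjTranspose_conjTranspose p, ← conjTranspose_mul, ← conjTranspose_mul,
      mul_sub_smul_one_mul_eq_zero A hpq hθ, conjTranspose_zero]
  have hs : (pᴴ * Mᴴ⁻¹ * p) 0 0 = star ((pᴴ * M⁻¹ * p) 0 0) := by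
    rw [← conjTranspose_nonsing_inv, ← conjTranspose_apply, conjTranspose_mul, conjTranspose_mul,
      conjTranspose_conjTranspose, Matrix.mul_assoc]
  have hsol := correction_eq_iff ((isUnit_conjTranspose M).mpr hA) hp hqp hqMp
  simp only [hs, ne_eq, star_eq_zero] at hsol
  rw [hrp, hMH]
  simpa only [not_not] using existsUnique_iff_and_not_exists_iff hsol
end

section
/- The correction equation (I - u u^H)(A - ρ I)(I - u u^H) t = -r, subject to the constraint u^H t = 0, has exactly one solution t if and only if ρ is not an eigenvalue of the (n-1)×(n-1) matrix U_⊥^H A U_⊥. -/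
/-!
Since `[u, U]` is unitary, `1 - u uᴴ = U Uᴴ` and `s ↦ U s` is a bijection from column vectors of
size `n - 1` onto the solutions of `uᴴ t = 0`, with inverse `t ↦ Uᴴ t`. The choice of `ρ` makes
`uᴴ r = 0`, so `-r = U Uᴴ (-r)`, and the correction equation for `t = U s` becomes
`(Uᴴ A U - ρ I) s = -Uᴴ r`. A square system has exactly one solution iff its matrix is
invertible, i.e. iff `ρ` is not an eigenvalue of `Uᴴ A U`.
-/

open Matrix

namespace Matrix

theorem existsUnique_mul_eq_iff_isUnit {m k K : Type*} [Fintype m] [DecidableEq m] [Nonempty k]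
    [Field K] (B : Matrix m m K) (c : Matrix m k K) :
    (∃! X : Matrix m k K, B * X = c) ↔ IsUnit B := by
  refine ⟨fun ⟨X, hX, huniq⟩ ↦ ?_, fun hB ↦ ?_⟩
  · rw [← mulVec_injective_iff_isUnit, ← B.coe_mulVecLin, injective_iff_map_eq_zero]
    intro v hv
    have hcol : B * replicateCol k v = 0 := by
      rw [← replicateCol_mulVec, ← B.mulVecLin_apply, hv, replicateCol_zero]
    have := huniq (X + replicateCol k v) (by simp only [Matrix.mul_add, hX, hcol, add_zero])
    funext i
    simpa using congrFun (congrFun (add_eq_left.1 this) i) (Classical.arbitrary k)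
  · have hdet := (isUnit_iff_isUnit_det B).1 hB
    exact ⟨B⁻¹ * c, mul_nonsing_inv_cancel_left B c hdet,
      fun X hX ↦ by rw [← hX, nonsing_inv_mul_cancel_left B X hdet]⟩

theorem conjTranspose_mul_sub_rayleigh_smul_one_mul_eq_zero {m R : Type*} [Fintype m]
    [DecidableEq m] [CommRing R] [StarRing R] (A : Matrix m m R) {u : Matrix m (Fin 1) R}
    (huu : uᴴ * u = 1) : uᴴ * ((A - (uᴴ * A * u) 0 0 • 1) * u) = 0 := by
  rw [Matrix.sub_mul, Matrix.mul_sub, Matrix.smul_mul, Matrix.mul_smul, Matrix.one_mul, huu,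
    ← Matrix.mul_assoc, sub_eq_zero]
  ext i j
  fin_cases i; fin_cases j
  simp

section OrthogonalComplement

variable {m p q k R : Type*} [CommRing R] [StarRing R] {u : Matrix m p R} {U : Matrix m q R}

theorem conjTranspose_fromCols_mul_self_eq_one_iff [Fintype m] [DecidableEq p] [DecidableEq q] :
    (fromCols u U)ᴴ * fromCols u U = 1 ↔
      uᴴ * u = 1 ∧ uᴴ * U = 0 ∧ Uᴴ * u = 0 ∧ Uᴴ * U = 1 := by
  rw [conjTranspose_fromCols_eq_fromRows_conjTranspose, fromRows_mul_fromCols, ← fromBlocks_one,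
    fromBlocks_inj]

theorem fromCols_mul_conjTranspose_self [Fintype p] [Fintype q] :
    fromCols u U * (fromCols u U)ᴴ = u * uᴴ + U * Uᴴ := by
  rw [conjTranspose_fromCols_eq_fromRows_conjTranspose, fromCols_mul_fromRows]

theorem conjTranspose_mul_cancel_left [Fintype m] [Fintype q] [DecidableEq q] (hUU : Uᴴ * U = 1)
    (X : Matrix q k R) : Uᴴ * (U * X) = X := by
  rw [← Matrix.mul_assoc, hUU, Matrix.one_mul]

variable [Fintype m] [Fintype p] [Fintype q] [DecidableEq m]

theorem conjTranspose_mul_eq_zero_iff_exists_eq_mul (huU : uᴴ * U = 0)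
    (hsum : u * uᴴ + U * Uᴴ = 1) (t : Matrix m k R) :
    uᴴ * t = 0 ↔ ∃ s : Matrix q k R, t = U * s := by
  refine ⟨fun ht ↦ ⟨Uᴴ * t, ?_⟩, fun ⟨s, hs⟩ ↦ by rw [hs, ← Matrix.mul_assoc, huU, Matrix.zero_mul]⟩
  calc t = (u * uᴴ + U * Uᴴ) * t := by rw [hsum, Matrix.one_mul]
    _ = U * (Uᴴ * t) := by
      rw [Matrix.add_mul, Matrix.mul_assoc, ht, Matrix.mul_zero, zero_add, Matrix.mul_assoc]

variable [DecidableEq q]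

theorem projection_sandwich_mul_eq_iff (huU : uᴴ * U = 0) (hUU : Uᴴ * U = 1)
    (hsum : u * uᴴ + U * Uᴴ = 1) (M : Matrix m m R) {c : Matrix m k R} (hc : uᴴ * c = 0)
    (s : Matrix q k R) :
    (1 - u * uᴴ) * M * (1 - u * uᴴ) * (U * s) = c ↔ Uᴴ * M * U * s = Uᴴ * c := by
  have hP : 1 - u * uᴴ = U * Uᴴ := by rw [← hsum, add_sub_cancel_left]
  obtain ⟨c', rfl⟩ := (conjTranspose_mul_eq_zero_iff_exists_eq_mul huU hsum c).1 hc
  have hlhs : (1 - u * uᴴ) * M * (1 - u * uᴴ) * (U * s) = U * (Uᴴ * M * U * s) := by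
    simp only [hP, Matrix.mul_assoc, conjTranspose_mul_cancel_left hUU]
  rw [hlhs, conjTranspose_mul_cancel_left hUU]
  refine ⟨fun h ↦ ?_, fun h ↦ by rw [h]⟩
  rw [← conjTranspose_mul_cancel_left hUU (Uᴴ * M * U * s), h, conjTranspose_mul_cancel_left hUU]

theorem existsUnique_correction_iff (huU : uᴴ * U = 0) (hUU : Uᴴ * U = 1)
    (hsum : u * uᴴ + U * Uᴴ = 1) (M : Matrix m m R) {c : Matrix m k R} (hc : uᴴ * c = 0) :
    (∃! t : Matrix m k R, uᴴ * t = 0 ∧ (1 - u * uᴴ) * M * (1 - u * uᴴ) * t = c) ↔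
      ∃! s : Matrix q k R, Uᴴ * M * U * s = Uᴴ * c := by
  have hinj : ∀ s s' : Matrix q k R, U * s = U * s' → s = s' := fun s s' h ↦ by
    rw [← conjTranspose_mul_cancel_left hUU s, h, conjTranspose_mul_cancel_left hUU]
  simp_rw [conjTranspose_mul_eq_zero_iff_exists_eq_mul huU hsum,
    ← projection_sandwich_mul_eq_iff huU hUU hsum M hc]
  constructor
  · rintro ⟨_, ⟨⟨s, rfl⟩, hs⟩, huniq⟩
    exact ⟨s, hs, fun s' hs' ↦ hinj _ _ (huniq _ ⟨⟨s', rfl⟩, hs'⟩)⟩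
  · rintro ⟨s, hs, huniq⟩
    refine ⟨U * s, ⟨⟨s, rfl⟩, hs⟩, ?_⟩
    rintro _ ⟨⟨s', rfl⟩, hs'⟩
    rw [huniq s' hs']

end OrthogonalComplement

end Matrix

theorem correction_unique_iff_not_eigenvalue_general
    {n : ℕ}
    (A : Matrix (Fin n) (Fin n) ℂ)
    (u : Matrix (Fin n) (Fin 1) ℂ)
    (U : Matrix (Fin n) (Fin (n - 1)) ℂ)
    (hU₁ : (fromCols u U)ᴴ * fromCols u U = 1)
    (hU₂ : fromCols u U * (fromCols u U)ᴴ = 1)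
    (ρ : ℂ) (hρ : ρ = (uᴴ * A * u) 0 0)
    (r : Matrix (Fin n) (Fin 1) ℂ)
    (hr : r = (A - ρ • 1) * u) :
    (∃! t : Matrix (Fin n) (Fin 1) ℂ,
        uᴴ * t = 0 ∧
          (1 - u * uᴴ) * (A - ρ • 1) * (1 - u * uᴴ) * t = -r) ↔
      ρ ∉ spectrum ℂ (Uᴴ * A * U) := by
  obtain ⟨huu, huU, -, hUU⟩ := conjTranspose_fromCols_mul_self_eq_one_iff.1 hU₁
  rw [fromCols_mul_conjTranspose_self] at hU₂
  have hur : uᴴ * -r = 0 := by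
    rw [Matrix.mul_neg, hr, hρ, conjTranspose_mul_sub_rayleigh_smul_one_mul_eq_zero A huu, neg_zero]
  have hcompress : Uᴴ * (A - ρ • 1) * U = Uᴴ * A * U - ρ • 1 := by
    rw [Matrix.mul_sub, Matrix.sub_mul, Matrix.mul_smul, Matrix.smul_mul, Matrix.mul_one, hUU]
  rw [existsUnique_correction_iff huU hUU hU₂ _ hur, existsUnique_mul_eq_iff_isUnit, hcompress,
    spectrum.notMem_iff, Algebra.algebraMap_eq_smul_one, ← IsUnit.neg_iff, neg_sub]

/-- The correction equation `(I - u uᴴ)(A - ρ I)(I - u uᴴ) t = -r`, subject to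
`uᴴ t = 0`, has exactly one solution iff `ρ` is not an eigenvalue of
`U⊥ᴴ A U⊥`, where `[u, U⊥]` is unitary. -/
theorem correction_unique_iff_not_eigenvalue
    {n : ℕ} (hn : 2 ≤ n)
    (A : Matrix (Fin n) (Fin n) ℂ)
    (u : Matrix (Fin n) (Fin 1) ℂ)
    (U : Matrix (Fin n) (Fin (n - 1)) ℂ)
    (hU₁ : (fromCols u U)ᴴ * fromCols u U = 1)
    (hU₂ : fromCols u U * (fromCols u U)ᴴ = 1)
    (ρ : ℂ) (hρ : ρ = (uᴴ * A * u) 0 0)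
    (r : Matrix (Fin n) (Fin 1) ℂ)
    (hr : r = (A - ρ • 1) * u) :
    (∃! t : Matrix (Fin n) (Fin 1) ℂ,
        uᴴ * t = 0 ∧
          (1 - u * uᴴ) * (A - ρ • 1) * (1 - u * uᴴ) * t = -r) ↔
      ρ ∉ spectrum ℂ (Uᴴ * A * U) :=
  correction_unique_iff_not_eigenvalue_general A u U hU₁ hU₂ ρ hρ r hr
end

section
/- Suppose α₀ := u^H (A - λ̃ I)^{-1} u ≠ 0. Then the vector v = -u + (1/α₀) (A - λ̃ I)^{-1} u satisfies u^H v = 0 and (I - u u^H)(A - λ̃ I)(I - u u^H) v = -r, i.e., it is the unique solution of the Jacobi–Davidson correction equation. -/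
/-!
Write `B = A - λ̃ I` and `P = 1 - u uᴴ`. Since `P z = z - (uᴴ z) u`, the equation `P B w = -r`
says that `B w = -r + c u` for the scalar `c = uᴴ B w`, i.e. `w = -u + c B⁻¹ u`; on this line
`uᴴ w = -1 + c α₀`, so `uᴴ w = 0` forces `c = 1 / α₀`. Conversely every point of the line solves
`P B w = -r`, because `P u = 0` and `P r = r`, the latter since `λ̃` is the Rayleigh quotient.
Only `uᴴ u = 1` is used about `uᴴ`, so the argument is run for any row vector `y` with `y u = 1`.
-/

open Matrix

namespace Matrix

variable {R n : Type*} [Fintype n] [DecidableEq n]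

theorem eq_smul_one_of_fin_one [Semiring R] (M : Matrix (Fin 1) (Fin 1) R) : M = M 0 0 • 1 := by
  ext i j
  fin_cases i; fin_cases j; simp

section ObliqueProjection

variable [CommRing R] (u : Matrix n (Fin 1) R) (y : Matrix (Fin 1) n R)

theorem one_sub_mul_mul (z : Matrix n (Fin 1) R) :
    (1 - u * y) * z = z - (y * z) 0 0 • u := by
  rw [Matrix.sub_mul, Matrix.one_mul, Matrix.mul_assoc]
  congr 1
  nth_rw 1 [eq_smul_one_of_fin_one (y * z)]
  rw [Matrix.mul_smul, Matrix.mul_one]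

variable {u y}

theorem one_sub_mul_mul_of_mul_eq_zero_s12 {z : Matrix n (Fin 1) R} (hz : y * z = 0) :
    (1 - u * y) * z = z := by
  simp [one_sub_mul_mul, hz]

theorem one_sub_mul_mul_self (hyu : y * u = 1) : (1 - u * y) * u = 0 := by
  simp [one_sub_mul_mul, hyu]

theorem mul_sub_smul_one_mul_self_eq_zero (hyu : y * u = 1) (A : Matrix n n R) :
    y * ((A - (y * A * u) 0 0 • 1) * u) = 0 := by
  rw [← Matrix.mul_assoc, Matrix.mul_sub, Matrix.sub_mul, Matrix.mul_smul, Matrix.mul_one,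
    Matrix.smul_mul, hyu, ← eq_smul_one_of_fin_one, sub_self]

end ObliqueProjection

section CorrectionEquation

variable [CommRing R] {B : Matrix n n R} {u : Matrix n (Fin 1) R} {y : Matrix (Fin 1) n R}

noncomputable def correctionCandidate (B : Matrix n n R) (u : Matrix n (Fin 1) R) (c : R) :
    Matrix n (Fin 1) R :=
  -u + c • (B⁻¹ * u)

theorem mul_correctionCandidate_eq_zero_iff (hyu : y * u = 1) (c : R) :
    y * correctionCandidate B u c = 0 ↔ c * (y * B⁻¹ * u) 0 0 = 1 := by
  set α := (y * B⁻¹ * u) 0 0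
  have hα : y * B⁻¹ * u = α • 1 := eq_smul_one_of_fin_one _
  rw [correctionCandidate, Matrix.mul_add, Matrix.mul_neg, hyu, Matrix.mul_smul,
    ← Matrix.mul_assoc, hα, smul_smul, neg_add_eq_zero, eq_comm]
  exact ⟨fun h => by simpa using congrFun (congrFun h 0) 0, fun h => by rw [h, one_smul]⟩

theorem mul_correctionCandidate (hB : IsUnit B) (c : R) :
    B * correctionCandidate B u c = -(B * u) + c • u := by
  rw [correctionCandidate, Matrix.mul_add, Matrix.mul_neg, Matrix.mul_smul,
    mul_nonsing_inv_cancel_left _ _ (B.isUnit_iff_isUnit_det.mp hB)]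

theorem one_sub_mul_mul_mul_correctionCandidate (hB : IsUnit B) (hyu : y * u = 1)
    (hr : y * (B * u) = 0) (c : R) :
    (1 - u * y) * (B * correctionCandidate B u c) = -(B * u) := by
  rw [mul_correctionCandidate hB, Matrix.mul_add, Matrix.mul_neg, Matrix.mul_smul,
    one_sub_mul_mul_of_mul_eq_zero_s12 hr, one_sub_mul_mul_self hyu, smul_zero, add_zero]

theorem eq_correctionCandidate_of_one_sub_mul_mul_eq (hB : IsUnit B) {w : Matrix n (Fin 1) R}
    (h : (1 - u * y) * (B * w) = -(B * u)) :
    w = correctionCandidate B u ((y * (B * w)) 0 0) := by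
  have hdet := B.isUnit_iff_isUnit_det.mp hB
  set c := (y * (B * w)) 0 0
  rw [one_sub_mul_mul, sub_eq_iff_eq_add', add_comm] at h
  calc w = B⁻¹ * (B * w) := (nonsing_inv_mul_cancel_left B w hdet).symm
    _ = _ := by
      rw [h, correctionCandidate, Matrix.mul_add, Matrix.mul_neg, Matrix.mul_smul,
        nonsing_inv_mul_cancel_left B u hdet]

end CorrectionEquation

end Matrix

/-- If `α₀ = uᴴ (A - λ̃ I)⁻¹ u ≠ 0`, then
`v = -u + (1/α₀) (A - λ̃ I)⁻¹ u` satisfies `uᴴ v = 0` and the Jacobi–Davidson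
correction equation, and it is the unique such solution. -/
theorem jd_explicit_unique_solution
    {n : ℕ} (A : Matrix (Fin n) (Fin n) ℂ) (lam : ℂ)
    (hA : IsUnit (A - lam • (1 : Matrix (Fin n) (Fin n) ℂ)))
    (u : Matrix (Fin n) (Fin 1) ℂ)
    (hu : uᴴ * u = 1)
    (hlam : (uᴴ * A * u) 0 0 = lam)
    (r : Matrix (Fin n) (Fin 1) ℂ)
    (hr : r = (A - lam • 1) * u)
    (α₀ : ℂ) (hα₀ : α₀ = (uᴴ * (A - lam • (1 : Matrix (Fin n) (Fin n) ℂ))⁻¹ * u) 0 0)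
    (hα : α₀ ≠ 0)
    (v : Matrix (Fin n) (Fin 1) ℂ)
    (hv : v = -u + α₀⁻¹ • ((A - lam • (1 : Matrix (Fin n) (Fin n) ℂ))⁻¹ * u)) :
    uᴴ * v = 0 ∧
      (1 - u * uᴴ) * (A - lam • 1) * (1 - u * uᴴ) * v = -r ∧
      ∀ w : Matrix (Fin n) (Fin 1) ℂ,
        uᴴ * w = 0 →
          (1 - u * uᴴ) * (A - lam • 1) * (1 - u * uᴴ) * w = -r → w = v := by
  have hru : uᴴ * ((A - lam • 1) * u) = 0 := hlam ▸ mul_sub_smul_one_mul_self_eq_zero hu A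
  have hv' : v = correctionCandidate (A - lam • 1) u α₀⁻¹ := hv
  have huv : uᴴ * v = 0 := by
    rw [hv', mul_correctionCandidate_eq_zero_iff hu, ← hα₀, inv_mul_cancel₀ hα]
  subst hr
  refine ⟨huv, ?_, fun w hw hcorr => ?_⟩
  · rw [Matrix.mul_assoc, one_sub_mul_mul_of_mul_eq_zero_s12 huv, Matrix.mul_assoc, hv',
      one_sub_mul_mul_mul_correctionCandidate hA hu hru]
  · rw [Matrix.mul_assoc, one_sub_mul_mul_of_mul_eq_zero_s12 hw, Matrix.mul_assoc] at hcorr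
    have hw' := eq_correctionCandidate_of_one_sub_mul_mul_eq hA hcorr
    rw [hw', mul_correctionCandidate_eq_zero_iff hu, ← hα₀] at hw
    rw [hw', hv', eq_inv_of_mul_eq_one_left hw]
end
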